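/- arXiv:2312.00198 — 2 statements merged into one kernel-verified Lean document; each statement's English description precedes it below -/
import Mathlib

section
/- Optimal attacks via the meta-MDP (Proposition 1): for a deterministic stationary attack policy ν, define its meta-MDP value V̄(ν) := ∑_{n=0}^∞ γ̄^n · E_{s̄ ∼ μ_n}[ r̄(s̄, ν(s̄)) ] and its attacker interaction value W(ν) := ∑_{t=0}^∞ γ^t · E_{s̄ ∼ μ_{4t+3}}[ G(s̄) ], where G(s̄) := g(s, a, ν(s̄)) when s̄ = (s,o,a,r) lies in the component S×O×A×R and G(s̄) := 0 otherwise. Then both series converge absolutely, and V̄(ν) = γ^{3/4} · W(ν) for every ν. Consequently, a deterministic stationary attack policy maximizes V̄ over all deterministic stationary attack policies if and only if it maximizes W, and the maxima (which exist since there are finitely many deterministic stationary attack policies) satisfy max_ν V̄(ν) = γ^{3/4} · max_ν W(ν). -/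
/-!
Optimal attacks via the meta-MDP (Proposition 1): the meta-MDP value of any deterministic
stationary attack policy coincides (up to the factor `γ^{3/4}`) with the attacker's value
in the victim-attacker-environment interaction, so both notions of optimal attack coincide.
-/

section MetaMDP

variable {S O A : Type*} {R : Finset ℝ}

/-- The meta-state space `S̄ = S ⊕ (S×O) ⊕ (S×O×A) ⊕ (S×O×A×R)`. -/
abbrev MetaState (S O A : Type*) (R : Finset ℝ) : Type _ :=
  S ⊕ (S × O) ⊕ (S × O × A) ⊕ (S × O × A × {r : ℝ // r ∈ R})

/-- A deterministic stationary attack policy: a feasible meta-action for each meta-state. -/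
structure AttackPolicy (B₁ : S → Finset S) (B₂ : S → O → Finset O)
    (B₃ : S → O → A → Finset A)
    (B₄ : S → O → A → {r : ℝ // r ∈ R} → Finset {r : ℝ // r ∈ R}) where
  ν₁ : S → S
  ν₂ : S → O → O
  ν₃ : S → O → A → A
  ν₄ : S → O → A → {r : ℝ // r ∈ R} → {r : ℝ // r ∈ R}
  h₁ : ∀ s, ν₁ s ∈ B₁ s
  h₂ : ∀ s o, ν₂ s o ∈ B₂ s o
  h₃ : ∀ s o a, ν₃ s o a ∈ B₃ s o a
  h₄ : ∀ s o a r, ν₄ s o a r ∈ B₄ s o a r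

variable {B₁ : S → Finset S} {B₂ : S → O → Finset O} {B₃ : S → O → A → Finset A}
  {B₄ : S → O → A → {r : ℝ // r ∈ R} → Finset {r : ℝ // r ∈ R}}

/-- The kernel `s̄ ↦ P̄(· | s̄, ν(s̄))` of the meta-MDP under the attack policy `ν`. -/
noncomputable def metaKernel (P : S → A → PMF S) (Ω : S → PMF O)
    (Rw : S → A → PMF {r : ℝ // r ∈ R}) (π : O → PMF A)
    (ν : AttackPolicy B₁ B₂ B₃ B₄) :
    MetaState S O A R → PMF (MetaState S O A R)
  | Sum.inl s =>
      (Ω (ν.ν₁ s)).map (fun o => Sum.inr (Sum.inl (ν.ν₁ s, o)))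
  | Sum.inr (Sum.inl (s, o)) =>
      (π (ν.ν₂ s o)).map (fun a => Sum.inr (Sum.inr (Sum.inl (s, ν.ν₂ s o, a))))
  | Sum.inr (Sum.inr (Sum.inl (s, o, a))) =>
      (Rw s (ν.ν₃ s o a)).map (fun r => Sum.inr (Sum.inr (Sum.inr (s, o, ν.ν₃ s o a, r))))
  | Sum.inr (Sum.inr (Sum.inr (s, o, a, _r))) =>
      (P s a).map Sum.inl

/-- The laws `μ₀ := μ̄`, `μ_{n+1} := μ_n.bind (P̄(· | ·, ν(·)))` of the meta-state sequence. -/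
noncomputable def metaLaw (P : S → A → PMF S) (Ω : S → PMF O)
    (Rw : S → A → PMF {r : ℝ // r ∈ R}) (π : O → PMF A) (μ : PMF S)
    (ν : AttackPolicy B₁ B₂ B₃ B₄) : ℕ → PMF (MetaState S O A R)
  | 0 => μ.map Sum.inl
  | n + 1 => (metaLaw P Ω Rw π μ ν n).bind (metaKernel P Ω Rw π ν)

/-- The meta-reward `r̄(s̄, ν(s̄))`, equal to `g(s, a, r†)` on the component `S×O×A×R`
(where `r† = ν₄(s,o,a,r)`), and `0` on the other three components.  This also equals the
function `G(s̄)` from the attacker's interaction value. -/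
noncomputable def metaReward (g : S → A → {r : ℝ // r ∈ R} → ℝ)
    (ν : AttackPolicy B₁ B₂ B₃ B₄) : MetaState S O A R → ℝ
  | Sum.inr (Sum.inr (Sum.inr (s, o, a, r))) => g s a (ν.ν₄ s o a r)
  | _ => 0

/-- The meta-MDP value `V̄(ν) := ∑_{n=0}^∞ γ̄ⁿ · E_{s̄ ∼ μ_n}[ r̄(s̄, ν(s̄)) ]`, `γ̄ = γ^(1/4)`. -/
noncomputable def metaValue [Fintype S] [Fintype O] [Fintype A]
    (P : S → A → PMF S) (Ω : S → PMF O) (Rw : S → A → PMF {r : ℝ // r ∈ R})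
    (π : O → PMF A) (μ : PMF S) (γ : ℝ) (g : S → A → {r : ℝ // r ∈ R} → ℝ)
    (ν : AttackPolicy B₁ B₂ B₃ B₄) : ℝ :=
  ∑' n : ℕ, (γ ^ ((1 : ℝ) / 4)) ^ n *
    ∑ sbar : MetaState S O A R,
      ((metaLaw P Ω Rw π μ ν n) sbar).toReal * metaReward g ν sbar

/-- The attacker's interaction value `W(ν) := ∑_{t=0}^∞ γᵗ · E_{s̄ ∼ μ_{4t+3}}[ G(s̄) ]`. -/
noncomputable def attackValue [Fintype S] [Fintype O] [Fintype A]
    (P : S → A → PMF S) (Ω : S → PMF O) (Rw : S → A → PMF {r : ℝ // r ∈ R})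
    (π : O → PMF A) (μ : PMF S) (γ : ℝ) (g : S → A → {r : ℝ // r ∈ R} → ℝ)
    (ν : AttackPolicy B₁ B₂ B₃ B₄) : ℝ :=
  ∑' t : ℕ, γ ^ t *
    ∑ sbar : MetaState S O A R,
      ((metaLaw P Ω Rw π μ ν (4 * t + 3)) sbar).toReal * metaReward g ν sbar

/-- Component index of a meta-state. -/
def mcomp : MetaState S O A R → ℕ
  | Sum.inl _ => 0
  | Sum.inr (Sum.inl _) => 1
  | Sum.inr (Sum.inr (Sum.inl _)) => 2
  | Sum.inr (Sum.inr (Sum.inr _)) => 3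

lemma metaKernel_comp (P : S → A → PMF S) (Ω : S → PMF O)
    (Rw : S → A → PMF {r : ℝ // r ∈ R}) (π : O → PMF A)
    (ν : AttackPolicy B₁ B₂ B₃ B₄) :
    ∀ sbar' sbar, sbar ∈ (metaKernel P Ω Rw π ν sbar').support →
      mcomp sbar = (mcomp sbar' + 1) % 4 := by
  rintro (s | ⟨s, o⟩ | ⟨s, o, a⟩ | ⟨s, o, a, r⟩) sbar h <;>
    simp only [metaKernel, PMF.support_map, Set.mem_image] at h <;>
    obtain ⟨x, -, rfl⟩ := h <;> simp [mcomp]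

lemma metaLaw_comp (P : S → A → PMF S) (Ω : S → PMF O)
    (Rw : S → A → PMF {r : ℝ // r ∈ R}) (π : O → PMF A) (μ : PMF S)
    (ν : AttackPolicy B₁ B₂ B₃ B₄) :
    ∀ n sbar, sbar ∈ (metaLaw P Ω Rw π μ ν n).support → mcomp sbar = n % 4 := by
  intro n
  induction n with
  | zero =>
    intro sbar h
    simp only [metaLaw, PMF.support_map, Set.mem_image] at h
    obtain ⟨x, -, rfl⟩ := h
    rfl
  | succ n ih =>
    intro sbar h
    rw [show metaLaw P Ω Rw π μ ν (n + 1)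
        = (metaLaw P Ω Rw π μ ν n).bind (metaKernel P Ω Rw π ν) from rfl,
      PMF.support_bind] at h
    simp only [Set.mem_iUnion] at h
    obtain ⟨sbar', h1, h2⟩ := h
    have := metaKernel_comp P Ω Rw π ν sbar' sbar h2
    rw [this, ih sbar' h1]
    omega

lemma inner_sum_zero [Fintype S] [Fintype O] [Fintype A]
    (P : S → A → PMF S) (Ω : S → PMF O)
    (Rw : S → A → PMF {r : ℝ // r ∈ R}) (π : O → PMF A) (μ : PMF S)
    (g : S → A → {r : ℝ // r ∈ R} → ℝ)
    (ν : AttackPolicy B₁ B₂ B₃ B₄) (n : ℕ) (hn : n % 4 ≠ 3) :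
    ∑ sbar : MetaState S O A R,
      ((metaLaw P Ω Rw π μ ν n) sbar).toReal * metaReward g ν sbar = 0 := by
  apply Finset.sum_eq_zero
  rintro (s | ⟨s, o⟩ | ⟨s, o, a⟩ | ⟨s, o, a, r⟩) -
  · simp [metaReward]
  · simp [metaReward]
  · simp [metaReward]
  · have hz : (metaLaw P Ω Rw π μ ν n) (Sum.inr (Sum.inr (Sum.inr (s, o, a, r)))) = 0 := by
      by_contra h
      have := metaLaw_comp P Ω Rw π μ ν n _ ((PMF.mem_support_iff _ _).mpr h)
      exact hn ((by simpa [mcomp] using this.symm))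
    simp [hz]

theorem optimal_attack_via_meta_mdp
    (S O A : Type*) [Fintype S] [Fintype O] [Fintype A]
    [Nonempty S] [Nonempty O] [Nonempty A]
    (R : Finset ℝ) (hR : R.Nonempty)
    (P : S → A → PMF S) (Ω : S → PMF O) (Rw : S → A → PMF {r : ℝ // r ∈ R})
    (γ : ℝ) (hγ : 0 < γ ∧ γ < 1) (μ : PMF S)
    (π : O → PMF A)
    (g : S → A → {r : ℝ // r ∈ R} → ℝ)
    (B₁ : S → Finset S) (B₂ : S → O → Finset O) (B₃ : S → O → A → Finset A)
    (B₄ : S → O → A → {r : ℝ // r ∈ R} → Finset {r : ℝ // r ∈ R})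
    (hB₁ : ∀ s, (B₁ s).Nonempty) (hB₂ : ∀ s o, (B₂ s o).Nonempty)
    (hB₃ : ∀ s o a, (B₃ s o a).Nonempty) (hB₄ : ∀ s o a r, (B₄ s o a r).Nonempty) :
    -- absolute convergence of both series and the identity V̄(ν) = γ^{3/4} · W(ν)
    (∀ ν : AttackPolicy B₁ B₂ B₃ B₄,
      Summable (fun n : ℕ => |(γ ^ ((1 : ℝ) / 4)) ^ n *
        ∑ sbar : MetaState S O A R,
          ((metaLaw P Ω Rw π μ ν n) sbar).toReal * metaReward g ν sbar|)
      ∧ Summable (fun t : ℕ => |γ ^ t *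
        ∑ sbar : MetaState S O A R,
          ((metaLaw P Ω Rw π μ ν (4 * t + 3)) sbar).toReal * metaReward g ν sbar|)
      ∧ metaValue P Ω Rw π μ γ g ν = γ ^ ((3 : ℝ) / 4) * attackValue P Ω Rw π μ γ g ν)
    -- ν maximizes V̄ iff ν maximizes W
    ∧ (∀ ν : AttackPolicy B₁ B₂ B₃ B₄,
        (∀ ν' : AttackPolicy B₁ B₂ B₃ B₄,
            metaValue P Ω Rw π μ γ g ν' ≤ metaValue P Ω Rw π μ γ g ν)
        ↔ (∀ ν' : AttackPolicy B₁ B₂ B₃ B₄,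
            attackValue P Ω Rw π μ γ g ν' ≤ attackValue P Ω Rw π μ γ g ν))
    -- the maxima exist
    ∧ (∃ ν : AttackPolicy B₁ B₂ B₃ B₄,
        ∀ ν' : AttackPolicy B₁ B₂ B₃ B₄,
          metaValue P Ω Rw π μ γ g ν' ≤ metaValue P Ω Rw π μ γ g ν)
    ∧ (∃ ν : AttackPolicy B₁ B₂ B₃ B₄,
        ∀ ν' : AttackPolicy B₁ B₂ B₃ B₄,
          attackValue P Ω Rw π μ γ g ν' ≤ attackValue P Ω Rw π μ γ g ν)
    -- and max_ν V̄(ν) = γ^{3/4} · max_ν W(ν)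
    ∧ (∀ νV νW : AttackPolicy B₁ B₂ B₃ B₄,
        (∀ ν' : AttackPolicy B₁ B₂ B₃ B₄,
            metaValue P Ω Rw π μ γ g ν' ≤ metaValue P Ω Rw π μ γ g νV) →
        (∀ ν' : AttackPolicy B₁ B₂ B₃ B₄,
            attackValue P Ω Rw π μ γ g ν' ≤ attackValue P Ω Rw π μ γ g νW) →
        metaValue P Ω Rw π μ γ g νV = γ ^ ((3 : ℝ) / 4) * attackValue P Ω Rw π μ γ g νW) := by
  obtain ⟨hγ0, hγ1⟩ := hγ
  set a : ℝ := γ ^ ((1 : ℝ) / 4) with ha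
  have ha0 : 0 < a := Real.rpow_pos_of_pos hγ0 _
  have ha1 : a < 1 := Real.rpow_lt_one hγ0.le hγ1 (by norm_num)
  have ha4 : a ^ (4 : ℕ) = γ := by
    rw [ha, ← Real.rpow_natCast (γ ^ ((1 : ℝ) / 4)) 4, ← Real.rpow_mul hγ0.le]
    norm_num
  have ha3 : a ^ (3 : ℕ) = γ ^ ((3 : ℝ) / 4) := by
    rw [ha, ← Real.rpow_natCast (γ ^ ((1 : ℝ) / 4)) 3, ← Real.rpow_mul hγ0.le]
    norm_num
  have hc0 : 0 < γ ^ ((3 : ℝ) / 4) := Real.rpow_pos_of_pos hγ0 _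
  -- the main per-policy statement
  have main : ∀ ν : AttackPolicy B₁ B₂ B₃ B₄,
      Summable (fun n : ℕ => |(γ ^ ((1 : ℝ) / 4)) ^ n *
        ∑ sbar : MetaState S O A R,
          ((metaLaw P Ω Rw π μ ν n) sbar).toReal * metaReward g ν sbar|)
      ∧ Summable (fun t : ℕ => |γ ^ t *
        ∑ sbar : MetaState S O A R,
          ((metaLaw P Ω Rw π μ ν (4 * t + 3)) sbar).toReal * metaReward g ν sbar|)
      ∧ metaValue P Ω Rw π μ γ g ν = γ ^ ((3 : ℝ) / 4) * attackValue P Ω Rw π μ γ g ν := by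
    intro ν
    set F : ℕ → ℝ := fun n => ∑ sbar : MetaState S O A R,
      ((metaLaw P Ω Rw π μ ν n) sbar).toReal * metaReward g ν sbar with hF
    set C : ℝ := ∑ sbar : MetaState S O A R, |metaReward g ν sbar| with hC
    have hFC : ∀ n, |F n| ≤ C := by
      intro n
      calc |F n| ≤ ∑ sbar : MetaState S O A R,
            |((metaLaw P Ω Rw π μ ν n) sbar).toReal * metaReward g ν sbar| :=
              Finset.abs_sum_le_sum_abs _ _
        _ ≤ C := by
            apply Finset.sum_le_sum
            intro sbar _
            rw [abs_mul, abs_of_nonneg ENNReal.toReal_nonneg]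
            have h1 : ((metaLaw P Ω Rw π μ ν n) sbar).toReal ≤ 1 := by
              have := ENNReal.toReal_mono (by simp) ((metaLaw P Ω Rw π μ ν n).coe_le_one sbar)
              simpa using this
            calc ((metaLaw P Ω Rw π μ ν n) sbar).toReal * |metaReward g ν sbar|
                ≤ 1 * |metaReward g ν sbar| :=
                  mul_le_mul_of_nonneg_right h1 (abs_nonneg _)
              _ = |metaReward g ν sbar| := one_mul _
    have hC0 : 0 ≤ C := Finset.sum_nonneg fun _ _ => abs_nonneg _
    have hSum1 : Summable (fun n : ℕ => |a ^ n * F n|) := by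
      apply Summable.of_nonneg_of_le (fun n => abs_nonneg _)
        (fun n => ?_) (((summable_geometric_of_lt_one ha0.le ha1)).mul_right C)
      rw [abs_mul, abs_pow, abs_of_pos ha0]
      exact mul_le_mul_of_nonneg_left (hFC n) (pow_nonneg ha0.le n)
    have hSum2 : Summable (fun t : ℕ => |γ ^ t * F (4 * t + 3)|) := by
      apply Summable.of_nonneg_of_le (fun t => abs_nonneg _)
        (fun t => ?_) (((summable_geometric_of_lt_one hγ0.le hγ1)).mul_right C)
      rw [abs_mul, abs_pow, abs_of_pos hγ0]
      exact mul_le_mul_of_nonneg_left (hFC _) (pow_nonneg hγ0.le t)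
    refine ⟨hSum1, hSum2, ?_⟩
    have hzero : ∀ n, n % 4 ≠ 3 → F n = 0 := fun n hn =>
      inner_sum_zero P Ω Rw π μ g ν n hn
    have hinj : Function.Injective (fun t : ℕ => 4 * t + 3) := fun x y h => by dsimp at h; omega
    have hsupp : Function.support (fun n : ℕ => a ^ n * F n)
        ⊆ Set.range (fun t : ℕ => 4 * t + 3) := by
      intro n hn
      have hFn : F n ≠ 0 := by
        intro h0
        exact hn (by simp [Function.mem_support, h0])
      have hmod : n % 4 = 3 := by
        by_contra h
        exact hFn (hzero n h)
      exact ⟨n / 4, by dsimp; omega⟩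
    have key : metaValue P Ω Rw π μ γ g ν
        = ∑' t : ℕ, a ^ (4 * t + 3) * F (4 * t + 3) :=
      (Function.Injective.tsum_eq hinj hsupp).symm
    rw [key]
    have hterm : ∀ t : ℕ, a ^ (4 * t + 3) * F (4 * t + 3)
        = γ ^ ((3 : ℝ) / 4) * (γ ^ t * F (4 * t + 3)) := by
      intro t
      rw [pow_add, pow_mul, ha4, ha3]
      ring
    rw [tsum_congr hterm, tsum_mul_left]
    rfl
  -- the maxima exist
  haveI hfin : Finite (AttackPolicy B₁ B₂ B₃ B₄) := by
    have hinj : Function.Injective (fun ν : AttackPolicy B₁ B₂ B₃ B₄ =>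
        (ν.ν₁, ν.ν₂, ν.ν₃, ν.ν₄)) := by
      rintro ⟨a1, a2, a3, a4, _, _, _, _⟩ ⟨b1, b2, b3, b4, _, _, _, _⟩ h
      simp only [Prod.mk.injEq] at h
      obtain ⟨h1, h2, h3, h4⟩ := h
      subst h1; subst h2; subst h3; subst h4; rfl
    exact Finite.of_injective _ hinj
  haveI hnem : Nonempty (AttackPolicy B₁ B₂ B₃ B₄) :=
    ⟨⟨fun s => (hB₁ s).choose, fun s o => (hB₂ s o).choose,
      fun s o a => (hB₃ s o a).choose, fun s o a r => (hB₄ s o a r).choose,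
      fun s => (hB₁ s).choose_spec, fun s o => (hB₂ s o).choose_spec,
      fun s o a => (hB₃ s o a).choose_spec, fun s o a r => (hB₄ s o a r).choose_spec⟩⟩
  have hid : ∀ ν : AttackPolicy B₁ B₂ B₃ B₄,
      metaValue P Ω Rw π μ γ g ν = γ ^ ((3 : ℝ) / 4) * attackValue P Ω Rw π μ γ g ν :=
    fun ν => (main ν).2.2
  have hiff : ∀ ν : AttackPolicy B₁ B₂ B₃ B₄,
      (∀ ν' : AttackPolicy B₁ B₂ B₃ B₄,
          metaValue P Ω Rw π μ γ g ν' ≤ metaValue P Ω Rw π μ γ g ν)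
      ↔ (∀ ν' : AttackPolicy B₁ B₂ B₃ B₄,
          attackValue P Ω Rw π μ γ g ν' ≤ attackValue P Ω Rw π μ γ g ν) := by
    intro ν
    constructor
    · intro h ν'
      have := h ν'
      rw [hid ν, hid ν'] at this
      exact le_of_mul_le_mul_left this hc0
    · intro h ν'
      rw [hid ν, hid ν']
      exact mul_le_mul_of_nonneg_left (h ν') hc0.le
  obtain ⟨νW, hνW⟩ := Finite.exists_max (attackValue P Ω Rw π μ γ g
    (B₁ := B₁) (B₂ := B₂) (B₃ := B₃) (B₄ := B₄))
  refine ⟨main, hiff, ⟨νW, (hiff νW).mpr hνW⟩, ⟨νW, hνW⟩, ?_⟩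
  intro νV νW' hV hW
  have h1 : attackValue P Ω Rw π μ γ g νV ≤ attackValue P Ω Rw π μ γ g νW' := hW νV
  have h2 : attackValue P Ω Rw π μ γ g νW' ≤ attackValue P Ω Rw π μ γ g νV :=
    ((hiff νV).mp hV) νW'
  rw [hid νV, le_antisymm h1 h2]

end MetaMDP
end

section
/- Correctness of robust backward induction (zero-sum case of Theorem 2): for every h ∈ {1,…,H+1} and every s ∈ S, V_h(s) = max_π min_ν U^{π,ν}_h(s), where the maximum ranges over deterministic Markovian victim policies and the minimum over deterministic Markovian attack strategies (both exist since all choice sets are finite and nonempty); moreover, any greedy policy π* whose action π*_h(s) attains the outer maximum in the definition of V_h(s) for every h and s satisfies min_ν U^{π*,ν}_h(s) = V_h(s) for all h and s. -/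
/-!
Correctness of robust backward induction (zero-sum case of Theorem 2): finite-horizon
robust control with state, action, and reward attacks.
-/

section RobustBI

variable {S A : Type*} {R : Finset ℝ}

/-- A deterministic Markovian attack strategy: state attacks `ν^S_h`, action attacks
`ν^A_h`, and reward attacks `ν^R_h`, all feasible. -/
structure AttackStrategy (S A : Type*) (R : Finset ℝ)
    (BS : ℕ → S → Finset S) (BA : ℕ → S → A → Finset A)
    (BRe : ℕ → S → A → {r : ℝ // r ∈ R} → Finset {r : ℝ // r ∈ R}) where
  stA : ℕ → S → S
  acA : ℕ → S → A → A
  acR : ℕ → S → A → {r : ℝ // r ∈ R} → {r : ℝ // r ∈ R}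
  feasS : ∀ h s, stA h s ∈ BS h s
  feasA : ∀ h s a, acA h s a ∈ BA h s a
  feasR : ∀ h s a r, acR h s a r ∈ BRe h s a r

/-- The victim's value `U^{π,ν}_h(s)` from a post-state-attack state `s` at time `h`:
`U_{H+1} := 0` and, with `a := π_h(s)`, `a† := ν^A_h(s,a)`,
`U_h(s) := ∑_r Rw_h(r | s,a†) · ( ν^R_h(s,a†,r) + ∑_{s'} P_h(s' | s,a†) · U_{h+1}(ν^S_{h+1}(s')) )`. -/
noncomputable def Uval [Fintype S]
    {BS : ℕ → S → Finset S} {BA : ℕ → S → A → Finset A}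
    {BRe : ℕ → S → A → {r : ℝ // r ∈ R} → Finset {r : ℝ // r ∈ R}}
    (H : ℕ) (P : ℕ → S → A → PMF S) (Rw : ℕ → S → A → PMF {r : ℝ // r ∈ R})
    (π : ℕ → S → A) (ν : AttackStrategy S A R BS BA BRe) (h : ℕ) (s : S) : ℝ :=
  if _hh : H + 1 ≤ h then 0
  else
    ∑ r : {r : ℝ // r ∈ R}, ((Rw h s (ν.acA h s (π h s))) r).toReal *
      ((ν.acR h s (ν.acA h s (π h s)) r : ℝ)
        + ∑ s' : S, ((P h s (ν.acA h s (π h s))) s').toReal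
            * Uval H P Rw π ν (h + 1) (ν.stA (h + 1) s'))
termination_by H + 1 - h
decreasing_by omega

/-- The robust values: `V_{H+1} := 0` and
`V_h(s) := max_{a} min_{a† ∈ B^A_h(s,a)} ∑_r Rw_h(r | s,a†) ·
  ( min_{r† ∈ B^R_h(s,a†,r)} r† + ∑_{s'} P_h(s' | s,a†) · min_{s† ∈ B^S_{h+1}(s')} V_{h+1}(s†) )`. -/
noncomputable def Vrob [Fintype S] [Fintype A] [Nonempty A]
    (H : ℕ) (P : ℕ → S → A → PMF S) (Rw : ℕ → S → A → PMF {r : ℝ // r ∈ R})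
    (BS : ℕ → S → Finset S) (BA : ℕ → S → A → Finset A)
    (BRe : ℕ → S → A → {r : ℝ // r ∈ R} → Finset {r : ℝ // r ∈ R})
    (hBS : ∀ h s, (BS h s).Nonempty) (hBA : ∀ h s a, (BA h s a).Nonempty)
    (hBR : ∀ h s a r, (BRe h s a r).Nonempty) (h : ℕ) (s : S) : ℝ :=
  if _hh : H + 1 ≤ h then 0
  else
    Finset.univ.sup' Finset.univ_nonempty (fun a : A =>
      (BA h s a).inf' (hBA h s a) (fun ad =>
        ∑ r : {r : ℝ // r ∈ R}, ((Rw h s ad) r).toReal *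
          ((BRe h s ad r).inf' (hBR h s ad r) (fun rd => (rd : ℝ))
            + ∑ s' : S, ((P h s ad) s').toReal *
                (BS (h + 1) s').inf' (hBS (h + 1) s')
                  (fun sd => Vrob H P Rw BS BA BRe hBS hBA hBR (h + 1) sd))))
termination_by H + 1 - h
decreasing_by omega

/-- The inner expression of the backward induction at `(h, s)` for a victim action `a`:
`min_{a† ∈ B^A_h(s,a)} ∑_r Rw_h(r|s,a†) · ( min_{r†} r† + ∑_{s'} P_h(s'|s,a†) · min_{s†} V_{h+1}(s†) )`,
so that `V_h(s) = max_a Qrob h s a` for `h ≤ H`. -/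
noncomputable def Qrob [Fintype S] [Fintype A] [Nonempty A]
    (H : ℕ) (P : ℕ → S → A → PMF S) (Rw : ℕ → S → A → PMF {r : ℝ // r ∈ R})
    (BS : ℕ → S → Finset S) (BA : ℕ → S → A → Finset A)
    (BRe : ℕ → S → A → {r : ℝ // r ∈ R} → Finset {r : ℝ // r ∈ R})
    (hBS : ∀ h s, (BS h s).Nonempty) (hBA : ∀ h s a, (BA h s a).Nonempty)
    (hBR : ∀ h s a r, (BRe h s a r).Nonempty) (h : ℕ) (s : S) (a : A) : ℝ :=
  (BA h s a).inf' (hBA h s a) (fun ad =>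
    ∑ r : {r : ℝ // r ∈ R}, ((Rw h s ad) r).toReal *
      ((BRe h s ad r).inf' (hBR h s ad r) (fun rd => (rd : ℝ))
        + ∑ s' : S, ((P h s ad) s').toReal *
            (BS (h + 1) s').inf' (hBS (h + 1) s')
              (fun sd => Vrob H P Rw BS BA BRe hBS hBA hBR (h + 1) sd)))

/-! ### Auxiliary machinery -/


noncomputable def argminF {α : Type*} (s : Finset α) (hs : s.Nonempty) (f : α → ℝ) : α :=
  (Finset.exists_mem_eq_inf' hs f).choose

lemma argminF_mem {α : Type*} (s : Finset α) (hs : s.Nonempty) (f : α → ℝ) :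
    argminF s hs f ∈ s := (Finset.exists_mem_eq_inf' hs f).choose_spec.1

lemma argminF_eq {α : Type*} (s : Finset α) (hs : s.Nonempty) (f : α → ℝ) :
    f (argminF s hs f) = s.inf' hs f := (Finset.exists_mem_eq_inf' hs f).choose_spec.2.symm

lemma pmf_apply_toReal_nonneg {α : Type*} (p : PMF α) (a : α) : 0 ≤ (p a).toReal :=
  ENNReal.toReal_nonneg

lemma pmf_sum_toReal_le_one {α : Type*} [Fintype α] (p : PMF α) :
    ∑ x : α, (p x).toReal ≤ 1 := by
  rw [← ENNReal.toReal_sum (fun a _ => p.apply_ne_top a)]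
  have h1 : (∑ x : α, p x) ≤ 1 := by
    rw [← p.tsum_coe]; exact ENNReal.sum_le_tsum _
  calc (∑ x : α, p x).toReal ≤ (1 : ENNReal).toReal :=
        ENNReal.toReal_mono ENNReal.one_ne_top h1
    _ = 1 := by simp

lemma sum_mul_ge {ι : Type*} [Fintype ι] (w x : ι → ℝ) (C : ℝ) (hC : 0 ≤ C)
    (hw : ∀ i, 0 ≤ w i) (hw1 : ∑ i, w i ≤ 1) (hx : ∀ i, -C ≤ x i) :
    -C ≤ ∑ i, w i * x i := by
  calc -C = 1 * (-C) := by ring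
    _ ≤ (∑ i, w i) * (-C) := mul_le_mul_of_nonpos_right hw1 (neg_nonpos.mpr hC)
    _ = ∑ i, w i * (-C) := by rw [Finset.sum_mul]
    _ ≤ ∑ i, w i * x i := Finset.sum_le_sum (fun i _ => mul_le_mul_of_nonneg_left (hx i) (hw i))

section Lemmas

variable [Fintype S] [Fintype A] [Nonempty A]
variable (H : ℕ) (P : ℕ → S → A → PMF S) (Rw : ℕ → S → A → PMF {r : ℝ // r ∈ R})
variable (BS : ℕ → S → Finset S) (BA : ℕ → S → A → Finset A)
variable (BRe : ℕ → S → A → {r : ℝ // r ∈ R} → Finset {r : ℝ // r ∈ R})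
variable (hBS : ∀ h s, (BS h s).Nonempty) (hBA : ∀ h s a, (BA h s a).Nonempty)
variable (hBR : ∀ h s a r, (BRe h s a r).Nonempty)

noncomputable def innerF (h : ℕ) (s : S) (ad : A) : ℝ :=
  ∑ r : {r : ℝ // r ∈ R}, ((Rw h s ad) r).toReal *
    ((BRe h s ad r).inf' (hBR h s ad r) (fun rd => (rd : ℝ))
      + ∑ s' : S, ((P h s ad) s').toReal *
          (BS (h + 1) s').inf' (hBS (h + 1) s')
            (fun sd => Vrob H P Rw BS BA BRe hBS hBA hBR (h + 1) sd))

lemma Qrob_eq_inf' (h : ℕ) (s : S) (a : A) :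
    Qrob H P Rw BS BA BRe hBS hBA hBR h s a
      = (BA h s a).inf' (hBA h s a) (innerF H P Rw BS BA BRe hBS hBA hBR h s) := rfl

lemma Vrob_eq_sup' (h : ℕ) (hh : h ≤ H) (s : S) :
    Vrob H P Rw BS BA BRe hBS hBA hBR h s
      = Finset.univ.sup' Finset.univ_nonempty
          (fun a : A => Qrob H P Rw BS BA BRe hBS hBA hBR h s a) := by
  rw [Vrob, dif_neg (by omega)]
  rfl

lemma Vrob_hi (h : ℕ) (hh : H + 1 ≤ h) (s : S) :
    Vrob H P Rw BS BA BRe hBS hBA hBR h s = 0 := by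
  rw [Vrob, dif_pos hh]

noncomputable def nustar : AttackStrategy S A R BS BA BRe where
  stA h s := argminF (BS h s) (hBS h s) (Vrob H P Rw BS BA BRe hBS hBA hBR h)
  acA h s a := argminF (BA h s a) (hBA h s a) (innerF H P Rw BS BA BRe hBS hBA hBR h s)
  acR h s a r := argminF (BRe h s a r) (hBR h s a r) (fun rd => (rd : ℝ))
  feasS h s := argminF_mem _ _ _
  feasA h s a := argminF_mem _ _ _
  feasR h s a r := argminF_mem _ _ _

/-- Against the universal worst-case attack, any policy gets at most the robust value. -/
lemma Uval_nustar_le_Vrob :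
    ∀ n h, H + 1 - h ≤ n → ∀ (π : ℕ → S → A) (s : S),
      Uval H P Rw π (nustar H P Rw BS BA BRe hBS hBA hBR) h s
        ≤ Vrob H P Rw BS BA BRe hBS hBA hBR h s := by
  intro n
  induction n with
  | zero =>
    intro h hn π s
    rw [Uval, dif_pos (by omega), Vrob, dif_pos (by omega)]
  | succ n ih =>
    intro h hn π s
    by_cases hh : H + 1 ≤ h
    · rw [Uval, dif_pos hh, Vrob, dif_pos hh]
    · push_neg at hh
      set ν := nustar H P Rw BS BA BRe hBS hBA hBR with hν
      rw [Uval, dif_neg (by omega)]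
      set a := π h s with ha
      set ad := ν.acA h s a with had
      have step1 : ∑ r : {r : ℝ // r ∈ R}, ((Rw h s ad) r).toReal *
          ((ν.acR h s ad r : ℝ)
            + ∑ s' : S, ((P h s ad) s').toReal
                * Uval H P Rw π ν (h + 1) (ν.stA (h + 1) s'))
          ≤ innerF H P Rw BS BA BRe hBS hBA hBR h s ad := by
        apply Finset.sum_le_sum
        intro r _
        apply mul_le_mul_of_nonneg_left _ ENNReal.toReal_nonneg
        apply add_le_add
        · -- reward attack value equals the inf
          exact le_of_eq (argminF_eq _ _ _)
        · apply Finset.sum_le_sum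
          intro s' _
          apply mul_le_mul_of_nonneg_left _ ENNReal.toReal_nonneg
          calc Uval H P Rw π ν (h + 1) (ν.stA (h + 1) s')
              ≤ Vrob H P Rw BS BA BRe hBS hBA hBR (h + 1) (ν.stA (h + 1) s') :=
                ih (h + 1) (by omega) π _
            _ = (BS (h + 1) s').inf' (hBS (h + 1) s')
                  (fun sd => Vrob H P Rw BS BA BRe hBS hBA hBR (h + 1) sd) :=
                argminF_eq _ _ _
      have step2 : innerF H P Rw BS BA BRe hBS hBA hBR h s ad
          = Qrob H P Rw BS BA BRe hBS hBA hBR h s a := (argminF_eq _ _ _)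
      have step3 : Qrob H P Rw BS BA BRe hBS hBA hBR h s a
          ≤ Vrob H P Rw BS BA BRe hBS hBA hBR h s := by
        rw [Vrob_eq_sup' H P Rw BS BA BRe hBS hBA hBR h (by omega) s]
        exact Finset.le_sup' _ (Finset.mem_univ a)
      calc _ ≤ innerF H P Rw BS BA BRe hBS hBA hBR h s ad := step1
        _ = Qrob H P Rw BS BA BRe hBS hBA hBR h s a := step2
        _ ≤ _ := step3

/-- A greedy policy gets at least the robust value against every attack. -/
lemma Vrob_le_Uval_greedy (πs : ℕ → S → A)
    (hgr : ∀ h : ℕ, 1 ≤ h → h ≤ H → ∀ s : S,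
      Qrob H P Rw BS BA BRe hBS hBA hBR h s (πs h s)
        = Vrob H P Rw BS BA BRe hBS hBA hBR h s) :
    ∀ n h, H + 1 - h ≤ n → 1 ≤ h → ∀ (ν : AttackStrategy S A R BS BA BRe) (s : S),
      Vrob H P Rw BS BA BRe hBS hBA hBR h s ≤ Uval H P Rw πs ν h s := by
  intro n
  induction n with
  | zero =>
    intro h hn h1 ν s
    rw [Uval, dif_pos (by omega), Vrob, dif_pos (by omega)]
  | succ n ih =>
    intro h hn h1 ν s
    by_cases hh : H + 1 ≤ h
    · rw [Uval, dif_pos hh, Vrob, dif_pos hh]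
    · push_neg at hh
      rw [Uval, dif_neg (by omega)]
      set a := πs h s with ha
      set ad := ν.acA h s a with had
      have step1 : Vrob H P Rw BS BA BRe hBS hBA hBR h s
          = Qrob H P Rw BS BA BRe hBS hBA hBR h s a := (hgr h h1 (by omega) s).symm
      have step2 : Qrob H P Rw BS BA BRe hBS hBA hBR h s a
          ≤ innerF H P Rw BS BA BRe hBS hBA hBR h s ad :=
        Finset.inf'_le _ (ν.feasA h s a)
      have step3 : innerF H P Rw BS BA BRe hBS hBA hBR h s ad
          ≤ ∑ r : {r : ℝ // r ∈ R}, ((Rw h s ad) r).toReal *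
            ((ν.acR h s ad r : ℝ)
              + ∑ s' : S, ((P h s ad) s').toReal
                  * Uval H P Rw πs ν (h + 1) (ν.stA (h + 1) s')) := by
        apply Finset.sum_le_sum
        intro r _
        apply mul_le_mul_of_nonneg_left _ ENNReal.toReal_nonneg
        apply add_le_add
        · exact Finset.inf'_le _ (ν.feasR h s ad r)
        · apply Finset.sum_le_sum
          intro s' _
          apply mul_le_mul_of_nonneg_left _ ENNReal.toReal_nonneg
          calc (BS (h + 1) s').inf' (hBS (h + 1) s')
                (fun sd => Vrob H P Rw BS BA BRe hBS hBA hBR (h + 1) sd)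
              ≤ Vrob H P Rw BS BA BRe hBS hBA hBR (h + 1) (ν.stA (h + 1) s') :=
                Finset.inf'_le _ (ν.feasS (h + 1) s')
            _ ≤ Uval H P Rw πs ν (h + 1) (ν.stA (h + 1) s') :=
                ih (h + 1) (by omega) (by omega) ν _
      calc _ = Qrob H P Rw BS BA BRe hBS hBA hBR h s a := step1
        _ ≤ innerF H P Rw BS BA BRe hBS hBA hBR h s ad := step2
        _ ≤ _ := step3

/-- Uniform lower bound on `Uval`. -/
lemma Uval_lower (M : ℝ) (hM0 : 0 ≤ M) (hM : ∀ r : {r : ℝ // r ∈ R}, |(r : ℝ)| ≤ M) :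
    ∀ n h, H + 1 - h ≤ n → ∀ (π : ℕ → S → A) (ν : AttackStrategy S A R BS BA BRe) (s : S),
      -((n : ℝ) * M) ≤ Uval H P Rw π ν h s := by
  intro n
  induction n with
  | zero =>
    intro h hn π ν s
    rw [Uval, dif_pos (by omega)]
    simp
  | succ n ih =>
    intro h hn π ν s
    by_cases hh : H + 1 ≤ h
    · rw [Uval, dif_pos hh]
      have : 0 ≤ ((n : ℝ) + 1) * M := by positivity
      push_cast
      linarith
    · rw [Uval, dif_neg hh]
      apply sum_mul_ge _ _ _ (by positivity)
        (fun r => ENNReal.toReal_nonneg) (pmf_sum_toReal_le_one _)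
      intro r
      have hr : -M ≤ (ν.acR h s (ν.acA h s (π h s)) r : ℝ) :=
        neg_le_of_abs_le (hM _)
      have hs' : -((n : ℝ) * M) ≤ ∑ s' : S, ((P h s (ν.acA h s (π h s))) s').toReal
          * Uval H P Rw π ν (h + 1) (ν.stA (h + 1) s') :=
        sum_mul_ge _ _ _ (by positivity) (fun s' => ENNReal.toReal_nonneg)
          (pmf_sum_toReal_le_one _) (fun s' => ih (h + 1) (by omega) π ν _)
      push_cast
      linarith

end Lemmas

theorem robust_backward_induction_correct
    (S A : Type*) [Fintype S] [Nonempty S] [Fintype A] [Nonempty A]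
    (R : Finset ℝ) (hR : R.Nonempty) (H : ℕ)
    (P : ℕ → S → A → PMF S) (Rw : ℕ → S → A → PMF {r : ℝ // r ∈ R})
    (BS : ℕ → S → Finset S) (BA : ℕ → S → A → Finset A)
    (BRe : ℕ → S → A → {r : ℝ // r ∈ R} → Finset {r : ℝ // r ∈ R})
    (hBS : ∀ h s, (BS h s).Nonempty) (hBA : ∀ h s a, (BA h s a).Nonempty)
    (hBR : ∀ h s a r, (BRe h s a r).Nonempty) :
    -- V_h(s) = max_π min_ν U^{π,ν}_h(s) for all 1 ≤ h ≤ H+1 and all s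
    (∀ h : ℕ, 1 ≤ h → h ≤ H + 1 → ∀ s : S,
      Vrob H P Rw BS BA BRe hBS hBA hBR h s
        = ⨆ π : ℕ → S → A, ⨅ ν : AttackStrategy S A R BS BA BRe, Uval H P Rw π ν h s)
    -- any greedy policy attains the robust value against the worst attack
    ∧ ∀ πs : ℕ → S → A,
        (∀ h : ℕ, 1 ≤ h → h ≤ H → ∀ s : S,
          Qrob H P Rw BS BA BRe hBS hBA hBR h s (πs h s)
            = Vrob H P Rw BS BA BRe hBS hBA hBR h s) →
        ∀ h : ℕ, 1 ≤ h → h ≤ H + 1 → ∀ s : S,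
          (⨅ ν : AttackStrategy S A R BS BA BRe, Uval H P Rw πs ν h s)
            = Vrob H P Rw BS BA BRe hBS hBA hBR h s := by
  -- the bound M on rewards
  set M : ℝ := R.sup' hR (fun r => |r|) with hMdef
  have hM : ∀ r : {r : ℝ // r ∈ R}, |(r : ℝ)| ≤ M := fun r => Finset.le_sup' _ r.2
  have hM0 : 0 ≤ M := le_trans (abs_nonneg _) (hM ⟨hR.choose, hR.choose_spec⟩)
  set ν₀ := nustar H P Rw BS BA BRe hBS hBA hBR with hν₀
  have : Nonempty (AttackStrategy S A R BS BA BRe) := ⟨ν₀⟩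
  -- boundedness of the attack-indexed family
  have hbdd : ∀ (π : ℕ → S → A) (h : ℕ) (s : S),
      BddBelow (Set.range fun ν : AttackStrategy S A R BS BA BRe =>
        Uval H P Rw π ν h s) := by
    intro π h s
    refine ⟨-((H + 1 : ℕ) * M), ?_⟩
    rintro x ⟨ν, rfl⟩
    exact Uval_lower H P Rw BS BA BRe M hM0 hM (H + 1) h (by omega) π ν s
  -- for every policy, the worst-case value is at most the robust value
  have hUle : ∀ (π : ℕ → S → A) (h : ℕ) (s : S),
      (⨅ ν : AttackStrategy S A R BS BA BRe, Uval H P Rw π ν h s)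
        ≤ Vrob H P Rw BS BA BRe hBS hBA hBR h s := by
    intro π h s
    refine le_trans (ciInf_le (hbdd π h s) ν₀) ?_
    exact Uval_nustar_le_Vrob H P Rw BS BA BRe hBS hBA hBR (H + 1) h (by omega) π s
  -- part 2
  have part2 : ∀ πs : ℕ → S → A,
      (∀ h : ℕ, 1 ≤ h → h ≤ H → ∀ s : S,
        Qrob H P Rw BS BA BRe hBS hBA hBR h s (πs h s)
          = Vrob H P Rw BS BA BRe hBS hBA hBR h s) →
      ∀ h : ℕ, 1 ≤ h → h ≤ H + 1 → ∀ s : S,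
        (⨅ ν : AttackStrategy S A R BS BA BRe, Uval H P Rw πs ν h s)
          = Vrob H P Rw BS BA BRe hBS hBA hBR h s := by
    intro πs hgr h h1 _ s
    refine le_antisymm (hUle πs h s) ?_
    refine le_ciInf fun ν => ?_
    exact Vrob_le_Uval_greedy H P Rw BS BA BRe hBS hBA hBR πs hgr (H + 1) h (by omega) h1 ν s
  refine ⟨?_, part2⟩
  intro h h1 h2 s
  -- a greedy policy via argmax
  classical
  set πs : ℕ → S → A := fun h s =>
    (Finset.exists_mem_eq_sup' (Finset.univ_nonempty (α := A))
      (Qrob H P Rw BS BA BRe hBS hBA hBR h s)).choose with hπs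
  have hgr : ∀ h : ℕ, 1 ≤ h → h ≤ H → ∀ s : S,
      Qrob H P Rw BS BA BRe hBS hBA hBR h s (πs h s)
        = Vrob H P Rw BS BA BRe hBS hBA hBR h s := by
    intro h h1 h2 s
    have := (Finset.exists_mem_eq_sup' (Finset.univ_nonempty (α := A))
      (Qrob H P Rw BS BA BRe hBS hBA hBR h s)).choose_spec.2
    rw [Vrob_eq_sup' H P Rw BS BA BRe hBS hBA hBR h h2 s]
    exact this.symm
  refine le_antisymm ?_ ?_
  · -- V ≤ sup, via the greedy policy
    have hbddA : BddAbove (Set.range fun π : ℕ → S → A =>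
        ⨅ ν : AttackStrategy S A R BS BA BRe, Uval H P Rw π ν h s) := by
      refine ⟨Vrob H P Rw BS BA BRe hBS hBA hBR h s, ?_⟩
      rintro x ⟨π, rfl⟩
      exact hUle π h s
    calc Vrob H P Rw BS BA BRe hBS hBA hBR h s
        = ⨅ ν : AttackStrategy S A R BS BA BRe, Uval H P Rw πs ν h s :=
          (part2 πs hgr h h1 h2 s).symm
      _ ≤ _ := le_ciSup hbddA πs
  · exact ciSup_le fun π => hUle π h s


end RobustBI
end
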